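/- Let q ∈ ℂ× be not a root of unity, and let t, s ∈ ℂ× (playing the roles of q^λ and q^μ). Set [λ]_q = (t − t⁻¹)/(q − q⁻¹), [μ]_q = (s − s⁻¹)/(q − q⁻¹), and for integers m, k define [λ − m]_q = (tq^{−m} − t⁻¹q^{m})/(q − q⁻¹) and [μ − k]_q = (sq^{−k} − s⁻¹q^{k})/(q − q⁻¹). On ℂ[x,y] consider the operator Ê_{λ,μ} = (t·x·∂_{q,x}² − [λ]_q·γ_{q,x}·∂_{q,x})·s·γ_{q,y}⁻² + s·y·∂_{q,y}² − [μ]_q·γ_{q,y}·∂_{q,y} (the action of E on the tensor product M_q(λω) ⊗ M_q(μω)). Then: (1) a vector v = Σ_{k=0}^n a_k x^{n−k} y^k (a_k ∈ ℂ) satisfies Ê_{λ,μ} v = 0 if and only if a_k·[k]_q·[μ−k+1]_q + a_{k−1}·s·q^{2−2k}·[n−k+1]_q·[λ−n+k]_q = 0 for all k = 1,…,n; (2) if moreover t² ∉ {q^{2m} : m ∈ ℕ₀} or s² ∉ {q^{2m} : m ∈ ℕ₀}, then for each n ∈ ℕ₀ the space of vectors v = Σ_{k=0}^n a_k x^{n−k}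 y^k with Ê_{λ,μ} v = 0 is exactly one-dimensional. -/

import Mathlib

open MvPolynomial

/-- The `q`-integer `[m]_q = (q^m − q^{−m})/(q − q^{−1})`. -/
noncomputable def qNum (q : ℂ) (m : ℕ) : ℂ := (q ^ m - q⁻¹ ^ m) / (q - q⁻¹)

/-- `[λ − m]_q = (t·q^{−m} − t⁻¹·q^{m})/(q − q⁻¹)`, where `t` plays the role of `q^λ`. -/
noncomputable def qWt (q t : ℂ) (m : ℤ) : ℂ := (t * q ^ (-m) - t⁻¹ * q ^ m) / (q - q⁻¹)

/-- `γ_{q,u}`: scales a monomial by `q` raised to its `u`-degree. -/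
noncomputable def gammaOp {σ : Type*} (q : ℂ) (u : σ) : Module.End ℂ (MvPolynomial σ ℂ) :=
  (basisMonomials σ ℂ).constr ℂ fun m => q ^ (m u) • monomial m 1

/-- `∂_{q,u}`: sends a monomial with `u`-degree `m` to `[m]_q` times the monomial with
`u`-degree `m − 1` (zero if `m = 0`). -/
noncomputable def delOp {σ : Type*} [DecidableEq σ] (q : ℂ) (u : σ) :
    Module.End ℂ (MvPolynomial σ ℂ) :=
  (basisMonomials σ ℂ).constr ℂ fun m => qNum q (m u) • monomial (m - Finsupp.single u 1) 1

/-- Multiplication by the variable `u`. -/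
noncomputable def mulOp {σ : Type*} (u : σ) : Module.End ℂ (MvPolynomial σ ℂ) :=
  LinearMap.mulLeft ℂ (X u)

namespace Stmt19

/- `ℂ[x,y] = MvPolynomial (Fin 2) ℂ`, with `x = X 0`, `y = X 1`. -/

/-- `Ê_{λ,μ} = (t·x·∂_{q,x}² − [λ]_q·γ_{q,x}·∂_{q,x})·s·γ_{q,y}⁻² + s·y·∂_{q,y}² − [μ]_q·γ_{q,y}·∂_{q,y}`,
the action of `E` on `M_q(λω) ⊗ M_q(μω)`, where `t = q^λ`, `s = q^μ`. -/
noncomputable def Ehat (q t s : ℂ) : Module.End ℂ (MvPolynomial (Fin 2) ℂ) :=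
  (t • (mulOp 0 * delOp q 0 ^ 2) - ((t - t⁻¹) / (q - q⁻¹)) • (gammaOp q 0 * delOp q 0))
      * (s • gammaOp q⁻¹ 1 ^ 2)
    + s • (mulOp 1 * delOp q 1 ^ 2)
    - ((s - s⁻¹) / (q - q⁻¹)) • (gammaOp q 1 * delOp q 1)

/-- The span of the monomials `x^{n−k} y^k`, `k = 0,…,n`. -/
noncomputable def Vn (n : ℕ) : Submodule ℂ (MvPolynomial (Fin 2) ℂ) :=
  Submodule.span ℂ {f : MvPolynomial (Fin 2) ℂ | ∃ k : ℕ, k ≤ n ∧ f = X 0 ^ (n - k) * X 1 ^ k}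

end Stmt19

/-!
Each summand of `Ê` is the action of `E` on one Verma module, realised on one variable: on
`x^i` it is `-[i]_q [λ-i+1]_q x^{i-1}`, by the identity `[λ-i]_q = q^i [λ]_q - q^λ [i]_q`.
Hence `Ê (x^i y^j) = -s q^{-2j} [i]_q [λ-i+1]_q x^{i-1} y^j - [j]_q [μ-j+1]_q x^i y^{j-1}`, and
the coefficient of `x^{n-k} y^{k-1}` in `Ê v` is minus the `k`-th relation of (1).

The relations `a_k c_k + a_{k-1} d_k = 0` always have the solution
`a_k = (∏_{j ≤ k} -d_j)(∏_{j > k} c_j)`. If `s² ∉ q^{2ℕ}` every `c_k` is nonzero, so a solution is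
determined by `a_0` and this one has `a_0 ≠ 0`; if `t² ∉ q^{2ℕ}` every `d_k` is nonzero, and the
same holds with `a_n` in place of `a_0`. Either way the solutions form a line.
-/

section QNumbers

variable {q : ℂ}

theorem qNum_zero (q : ℂ) : qNum q 0 = 0 := by simp [qNum]

theorem sub_inv_ne_zero (hq0 : q ≠ 0) (hq : q ^ 2 ≠ 1) : q - q⁻¹ ≠ 0 := by
  rw [sub_ne_zero]
  intro h
  exact hq (by rw [sq]; nth_rewrite 2 [h]; exact mul_inv_cancel₀ hq0)

theorem sq_ne_one_of_pow_two_mul_ne_one {k : ℕ} (hk : q ^ (2 * k) ≠ 1) : q ^ 2 ≠ 1 :=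
  fun h => hk (by rw [pow_mul, h, one_pow])

theorem qNum_ne_zero (hq0 : q ≠ 0) {k : ℕ} (hk : q ^ (2 * k) ≠ 1) : qNum q k ≠ 0 := by
  refine div_ne_zero (sub_ne_zero.mpr fun h => hk ?_)
    (sub_inv_ne_zero hq0 (sq_ne_one_of_pow_two_mul_ne_one hk))
  rw [two_mul, pow_add]
  nth_rewrite 2 [h]
  rw [← mul_pow, mul_inv_cancel₀ hq0, one_pow]

theorem qWt_natCast_ne_zero (hq0 : q ≠ 0) (hq : q ^ 2 ≠ 1) {t : ℂ} (ht0 : t ≠ 0) {m : ℕ}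
    (ht : t ^ 2 ≠ q ^ (2 * m)) : qWt q t m ≠ 0 := by
  refine div_ne_zero (sub_ne_zero.mpr fun h => ht ?_) (sub_inv_ne_zero hq0 hq)
  have hqm : q ^ m ≠ 0 := pow_ne_zero m hq0
  rw [zpow_neg, zpow_natCast] at h
  field_simp at h
  linear_combination h

theorem qWt_natCast (q t : ℂ) (i : ℕ) :
    qWt q t i = (t - t⁻¹) / (q - q⁻¹) * q ^ i - t * qNum q i := by
  rw [qWt, qNum, zpow_neg, zpow_natCast, ← inv_pow]
  ring

/-- `[k]_q [λ - k + 1]_q`, where `t = q^λ`. -/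
noncomputable def vermaCoeff (q t : ℂ) (k : ℕ) : ℂ := qNum q k * qWt q t ((k : ℤ) - 1)

theorem vermaCoeff_zero (q t : ℂ) : vermaCoeff q t 0 = 0 := by
  simp [vermaCoeff, qNum_zero]

theorem vermaCoeff_succ_ne_zero (hq0 : q ≠ 0) {t : ℂ} (ht0 : t ≠ 0) {i : ℕ}
    (hq : q ^ (2 * (i + 1)) ≠ 1) (ht : t ^ 2 ≠ q ^ (2 * i)) : vermaCoeff q t (i + 1) ≠ 0 := by
  rw [vermaCoeff, Nat.cast_succ, add_sub_cancel_right]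
  exact mul_ne_zero (qNum_ne_zero hq0 hq)
    (qWt_natCast_ne_zero hq0 (sq_ne_one_of_pow_two_mul_ne_one hq) ht0 ht)

end QNumbers

section MonomialOperators

variable {σ : Type*} (q : ℂ) (u : σ) (m : σ →₀ ℕ)

theorem gammaOp_monomial : gammaOp q u (monomial m 1) = q ^ m u • monomial m 1 := by
  rw [gammaOp]
  simpa using (basisMonomials σ ℂ).constr_basis ℂ (fun m => q ^ m u • monomial m (1 : ℂ)) m

theorem gammaOp_sq_monomial : (gammaOp q u ^ 2) (monomial m 1) = (q ^ m u) ^ 2 • monomial m 1 := by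
  rw [sq, Module.End.mul_apply, gammaOp_monomial, map_smul, gammaOp_monomial, smul_smul, sq]

theorem mulOp_monomial : mulOp u (monomial m 1) = monomial (m + Finsupp.single u 1) (1 : ℂ) := by
  rw [mulOp, LinearMap.mulLeft_apply, X, monomial_mul, one_mul, add_comm]

variable [DecidableEq σ]

theorem delOp_monomial :
    delOp q u (monomial m 1) = qNum q (m u) • monomial (m - Finsupp.single u 1) 1 := by
  rw [delOp]
  simpa using (basisMonomials σ ℂ).constr_basis ℂ
    (fun m => qNum q (m u) • monomial (m - Finsupp.single u 1) (1 : ℂ)) m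

theorem gammaOp_mul_delOp_monomial :
    (gammaOp q u * delOp q u) (monomial m 1)
      = (q ^ (m u - 1) * qNum q (m u)) • monomial (m - Finsupp.single u 1) 1 := by
  rw [Module.End.mul_apply, delOp_monomial, map_smul, gammaOp_monomial, smul_smul,
    Finsupp.tsub_apply, Finsupp.single_eq_same, mul_comm]

theorem mulOp_mul_delOp_sq_monomial :
    (mulOp u * delOp q u ^ 2) (monomial m 1)
      = (qNum q (m u) * qNum q (m u - 1)) • monomial (m - Finsupp.single u 1) 1 := by
  rw [Module.End.mul_apply, sq, Module.End.mul_apply, delOp_monomial, map_smul, delOp_monomial,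
    map_smul, map_smul, mulOp_monomial, smul_smul, Finsupp.tsub_apply, Finsupp.single_eq_same]
  rcases Nat.lt_or_ge (m u) 2 with hm | hm
  · obtain h | h : m u = 0 ∨ m u - 1 = 0 := by omega
    all_goals simp [h, qNum_zero]
  · rw [tsub_add_cancel_of_le (Finsupp.single_le_iff.mpr (by simp; omega))]

/-- The action of `E` on the Verma module of highest weight `q^λ = t`, realised on `ℂ[u]`. -/
noncomputable def vermaE (q t : ℂ) (u : σ) : Module.End ℂ (MvPolynomial σ ℂ) :=
  t • (mulOp u * delOp q u ^ 2) - ((t - t⁻¹) / (q - q⁻¹)) • (gammaOp q u * delOp q u)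

theorem vermaE_monomial (t : ℂ) :
    vermaE q t u (monomial m 1) = -vermaCoeff q t (m u) • monomial (m - Finsupp.single u 1) 1 := by
  rw [vermaE, LinearMap.sub_apply, LinearMap.smul_apply, LinearMap.smul_apply,
    mulOp_mul_delOp_sq_monomial, gammaOp_mul_delOp_monomial, smul_smul, smul_smul, ← sub_smul]
  congr 1
  rcases Nat.eq_zero_or_eq_succ_pred (m u) with h | h
  · simp [h, qNum_zero, vermaCoeff_zero]
  · rw [h, vermaCoeff, Nat.succ_sub_one, Nat.cast_succ, add_sub_cancel_right, qWt_natCast]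
    ring

end MonomialOperators

section TwoTermRecurrence

open Finset

variable {K : Type*} [Field K] (c d : ℕ → K) (n : ℕ)

def recSolutions : Submodule K (ℕ → K) where
  carrier := {a | ∀ k, 1 ≤ k → k ≤ n → a k * c k + a (k - 1) * d k = 0}
  add_mem' {a b} ha hb k hk hkn := by
    simp only [Pi.add_apply]
    linear_combination ha k hk hkn + hb k hk hkn
  zero_mem' := by simp
  smul_mem' r a ha k hk hkn := by
    simp only [Pi.smul_apply, smul_eq_mul]
    linear_combination r * ha k hk hkn

variable {c d n}

theorem mem_recSolutions {a : ℕ → K} :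
    a ∈ recSolutions c d n ↔ ∀ k, 1 ≤ k → k ≤ n → a k * c k + a (k - 1) * d k = 0 :=
  Iff.rfl

variable (c d n) in
def recSolution (k : ℕ) : K := (∏ j ∈ Ioc 0 k, -d j) * ∏ j ∈ Ioc k n, c j

theorem recSolution_mem : recSolution c d n ∈ recSolutions c d n := by
  rintro k hk hkn
  obtain ⟨k, rfl⟩ : ∃ j, k = j + 1 := ⟨k - 1, by omega⟩
  have hc : ∏ j ∈ Ioc k n, c j = c (k + 1) * ∏ j ∈ Ioc (k + 1) n, c j := by
    rw [← insert_Ioc_add_one_left_eq_Ioc (by omega), prod_insert (by simp)]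
  simp only [recSolution, Nat.add_sub_cancel, prod_Ioc_succ_top (Nat.zero_le k), hc]
  ring

theorem eq_zero_of_mem_recSolutions_of_apply_zero (hc : ∀ k, 1 ≤ k → k ≤ n → c k ≠ 0)
    {a : ℕ → K} (ha : a ∈ recSolutions c d n) (h0 : a 0 = 0) : ∀ k ≤ n, a k = 0 := by
  intro k hkn
  induction k with
  | zero => exact h0
  | succ k ih =>
    have hrec := ha (k + 1) (by omega) hkn
    rw [Nat.add_sub_cancel, ih (by omega), zero_mul, add_zero] at hrec
    exact (mul_eq_zero.mp hrec).resolve_right (hc (k + 1) (by omega) hkn)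

theorem eq_zero_of_mem_recSolutions_of_apply_last (hd : ∀ k, 1 ≤ k → k ≤ n → d k ≠ 0)
    {a : ℕ → K} (ha : a ∈ recSolutions c d n) (hn : a n = 0) : ∀ k ≤ n, a k = 0 := by
  suffices ∀ m ≤ n, a (n - m) = 0 from
    fun k hkn => by simpa [Nat.sub_sub_self hkn] using this (n - k) (by omega)
  intro m hmn
  induction m with
  | zero => simpa using hn
  | succ m ih =>
    have hrec := ha (n - m) (by omega) (by omega)
    rw [ih (by omega), zero_mul, zero_add, show n - m - 1 = n - (m + 1) by omega] at hrec
    exact (mul_eq_zero.mp hrec).resolve_right (hd (n - m) (by omega) (by omega))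

theorem exists_eq_mul_of_forall_apply_eq_zero {ι : Type*} {S : Submodule K (ι → K)}
    {I : Set ι} {b : ι → K} (hb : b ∈ S) {i₀ : ι} (hb₀ : b i₀ ≠ 0)
    (huniq : ∀ a ∈ S, a i₀ = 0 → ∀ i ∈ I, a i = 0) {a : ι → K} (ha : a ∈ S) :
    ∃ r, ∀ i ∈ I, a i = r * b i := by
  refine ⟨a i₀ / b i₀, fun i hi => ?_⟩
  have h := huniq (a - (a i₀ / b i₀) • b) (S.sub_mem ha (S.smul_mem _ hb))
    (by simp [div_mul_cancel₀ _ hb₀]) i hi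
  simpa [sub_eq_zero] using h

theorem exists_generator_recSolutions
    (h : (∀ k, 1 ≤ k → k ≤ n → c k ≠ 0) ∨ (∀ k, 1 ≤ k → k ≤ n → d k ≠ 0)) :
    ∃ b ∈ recSolutions c d n, (∃ k ≤ n, b k ≠ 0) ∧
      ∀ a ∈ recSolutions c d n, ∃ r, ∀ k ∈ Set.Iic n, a k = r * b k := by
  refine ⟨recSolution c d n, recSolution_mem, ?_⟩
  rcases h with hc | hd
  · have hb₀ : recSolution c d n 0 ≠ 0 := by
      simp only [recSolution, Ioc_self, prod_empty, one_mul]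
      exact prod_ne_zero_iff.mpr fun k hk => hc k (mem_Ioc.1 hk).1 (mem_Ioc.1 hk).2
    exact ⟨⟨0, n.zero_le, hb₀⟩, fun a ha => exists_eq_mul_of_forall_apply_eq_zero
      recSolution_mem hb₀ (fun a ha h0 => eq_zero_of_mem_recSolutions_of_apply_zero hc ha h0) ha⟩
  · have hbn : recSolution c d n n ≠ 0 := by
      simp only [recSolution, Ioc_self, prod_empty, mul_one]
      exact prod_ne_zero_iff.mpr fun k hk =>
        neg_ne_zero.mpr (hd k (mem_Ioc.1 hk).1 (mem_Ioc.1 hk).2)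
    exact ⟨⟨n, le_rfl, hbn⟩, fun a ha => exists_eq_mul_of_forall_apply_eq_zero
      recSolution_mem hbn (fun a ha hn => eq_zero_of_mem_recSolutions_of_apply_last hd ha hn) ha⟩

end TwoTermRecurrence

theorem MvPolynomial.coeff_sum_smul_monomial {R σ ι : Type*} [CommSemiring R] {s : Finset ι}
    {e : ι → σ →₀ ℕ} (he : Set.InjOn e s) (a : ι → R) {i : ι} (hi : i ∈ s) :
    coeff (e i) (∑ k ∈ s, a k • monomial (e k) (1 : R)) = a i := by
  classical
  rw [coeff_sum, Finset.sum_eq_single_of_mem i hi fun k hk hki => ?_]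
  · rw [coeff_smul, coeff_monomial, if_pos rfl, smul_eq_mul, mul_one]
  · rw [coeff_smul, coeff_monomial, if_neg (he.ne hk hi hki), smul_zero]

theorem MvPolynomial.sum_smul_monomial_eq_zero_iff {R σ ι : Type*} [CommSemiring R]
    {s : Finset ι} {e : ι → σ →₀ ℕ} (he : Set.InjOn e s) (a : ι → R) :
    ∑ k ∈ s, a k • monomial (e k) (1 : R) = 0 ↔ ∀ k ∈ s, a k = 0 := by
  refine ⟨fun h k hk => ?_, fun h => Finset.sum_eq_zero fun k hk => by rw [h k hk, zero_smul]⟩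
  rw [← coeff_sum_smul_monomial he a hk, h, coeff_zero]

namespace Stmt19

theorem Ehat_eq (q t s : ℂ) :
    Ehat q t s = vermaE q t 0 * (s • gammaOp q⁻¹ 1 ^ 2) + vermaE q s 1 := by
  rw [Ehat, vermaE, vermaE, add_sub_assoc]

noncomputable def bideg (i j : ℕ) : Fin 2 →₀ ℕ := Finsupp.single 0 i + Finsupp.single 1 j

@[simp] theorem bideg_apply_zero (i j : ℕ) : bideg i j 0 = i := by simp [bideg]

@[simp] theorem bideg_apply_one (i j : ℕ) : bideg i j 1 = j := by simp [bideg]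

theorem bideg_sub_single_zero (i j : ℕ) : bideg i j - Finsupp.single 0 1 = bideg (i - 1) j := by
  ext a; fin_cases a <;> simp [bideg]

theorem bideg_sub_single_one (i j : ℕ) : bideg i j - Finsupp.single 1 1 = bideg i (j - 1) := by
  ext a; fin_cases a <;> simp [bideg]

theorem injective_bideg_right (f : ℕ → ℕ) : Function.Injective fun k => bideg (f k) k :=
  fun k l h => by simpa using DFunLike.congr_fun h 1

theorem X_pow_mul_X_pow (i j : ℕ) :
    (X 0 ^ i * X 1 ^ j : MvPolynomial (Fin 2) ℂ) = monomial (bideg i j) 1 := by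
  rw [X_pow_eq_monomial, X_pow_eq_monomial, monomial_mul, one_mul, bideg]

theorem Ehat_monomial (q t s : ℂ) (i j : ℕ) :
    Ehat q t s (monomial (bideg i j) 1)
      = -(s * (q⁻¹ ^ j) ^ 2 * vermaCoeff q t i) • monomial (bideg (i - 1) j) 1
        - vermaCoeff q s j • monomial (bideg i (j - 1)) 1 := by
  rw [Ehat_eq, LinearMap.add_apply, Module.End.mul_apply, LinearMap.smul_apply,
    gammaOp_sq_monomial, smul_smul, map_smul, vermaE_monomial, vermaE_monomial,
    bideg_sub_single_zero, bideg_sub_single_one, smul_smul, neg_smul, neg_smul, sub_eq_add_neg]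
  simp only [bideg_apply_zero, bideg_apply_one, mul_neg, neg_smul, mul_assoc]

noncomputable def binaryForm (n : ℕ) (a : ℕ → ℂ) : MvPolynomial (Fin 2) ℂ :=
  ∑ k ∈ Finset.range (n + 1), a k • (X 0 ^ (n - k) * X 1 ^ k)

theorem binaryForm_eq_sum_monomial (n : ℕ) (a : ℕ → ℂ) :
    binaryForm n a = ∑ k ∈ Finset.range (n + 1), a k • monomial (bideg (n - k) k) 1 := by
  simp only [binaryForm, X_pow_mul_X_pow]

/-- `s q^{2-2k} [n-k+1]_q [λ-n+k]_q`. -/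
noncomputable def singularRecCoeff (q t s : ℂ) (n k : ℕ) : ℂ :=
  s * q ^ (2 - 2 * (k : ℤ)) * vermaCoeff q t (n - k + 1)

noncomputable def singularRec (q t s : ℂ) (n : ℕ) : Submodule ℂ (ℕ → ℂ) :=
  recSolutions (vermaCoeff q s) (singularRecCoeff q t s n) n

theorem mem_singularRec_iff (q t s : ℂ) (n : ℕ) (a : ℕ → ℂ) :
    a ∈ singularRec q t s n ↔ ∀ k : ℕ, 1 ≤ k → k ≤ n →
      a k * qNum q k * qWt q s ((k : ℤ) - 1)
        + a (k - 1) * s * q ^ (2 - 2 * (k : ℤ)) * qNum q (n - k + 1)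
          * qWt q t ((n : ℤ) - k) = 0 := by
  refine forall₂_congr fun k _ => forall_congr' fun hkn => ?_
  have hcast : (((n - k + 1 : ℕ) : ℤ) - 1) = (n : ℤ) - k := by omega
  simp only [vermaCoeff, singularRecCoeff, hcast, mul_assoc]

theorem singularRecCoeff_ne_zero {q t s : ℂ} (hq0 : q ≠ 0) (ht0 : t ≠ 0) (hs0 : s ≠ 0) {n k : ℕ}
    (hq : q ^ (2 * (n - k + 1)) ≠ 1) (ht : t ^ 2 ≠ q ^ (2 * (n - k))) :
    singularRecCoeff q t s n k ≠ 0 :=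
  mul_ne_zero (mul_ne_zero hs0 (zpow_ne_zero _ hq0)) (vermaCoeff_succ_ne_zero hq0 ht0 hq ht)

theorem singularRecCoeff_succ (q t s : ℂ) {n k : ℕ} (hk : k < n) :
    singularRecCoeff q t s n (k + 1) = s * (q⁻¹ ^ k) ^ 2 * vermaCoeff q t (n - k) := by
  have hq : q ^ (2 - 2 * ((k + 1 : ℕ) : ℤ)) = (q⁻¹ ^ k) ^ 2 := by
    rw [← pow_mul, inv_pow, ← zpow_natCast, ← zpow_neg]
    congr 1
    push_cast
    ring
  rw [singularRecCoeff, hq, show n - (k + 1) + 1 = n - k by omega]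

theorem Ehat_binaryForm (q t s : ℂ) (n : ℕ) (a : ℕ → ℂ) :
    Ehat q t s (binaryForm n a) = -∑ k ∈ Finset.range n,
      (a (k + 1) * vermaCoeff q s (k + 1) + a k * singularRecCoeff q t s n (k + 1))
        • monomial (bideg (n - (k + 1)) k) 1 := by
  rw [binaryForm_eq_sum_monomial, map_sum]
  simp only [map_smul, Ehat_monomial, smul_sub, Finset.sum_sub_distrib]
  rw [Finset.sum_range_succ, Finset.sum_range_succ' (fun k => a k • vermaCoeff q s k • _)]
  simp only [Nat.sub_self, vermaCoeff_zero, mul_zero, neg_zero, zero_smul, smul_zero, add_zero]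
  rw [← Finset.sum_sub_distrib, ← Finset.sum_neg_distrib]
  refine Finset.sum_congr rfl fun k hk => ?_
  rw [singularRecCoeff_succ q t s (Finset.mem_range.mp hk), Nat.sub_sub, Nat.add_sub_cancel]
  match_scalars
  ring

theorem Ehat_binaryForm_eq_zero_iff (q t s : ℂ) (n : ℕ) (a : ℕ → ℂ) :
    Ehat q t s (binaryForm n a) = 0 ↔ a ∈ singularRec q t s n := by
  rw [Ehat_binaryForm, neg_eq_zero,
    sum_smul_monomial_eq_zero_iff (injective_bideg_right fun k => n - (k + 1)).injOn,
    singularRec, mem_recSolutions]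
  constructor
  · intro h k hk hkn
    obtain ⟨k, rfl⟩ : ∃ j, k = j + 1 := ⟨k - 1, by omega⟩
    exact h k (Finset.mem_range.mpr hkn)
  · intro h k hk
    exact h (k + 1) (by omega) (Finset.mem_range.mp hk)

theorem mem_Vn_iff {n : ℕ} {w : MvPolynomial (Fin 2) ℂ} : w ∈ Vn n ↔ ∃ a, binaryForm n a = w := by
  constructor
  · intro hw
    induction hw using Submodule.span_induction with
    | mem f hf =>
      obtain ⟨k, hk, rfl⟩ := hf
      refine ⟨Pi.single k 1, ?_⟩
      simp [binaryForm, Pi.single_apply, ite_smul, hk]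
    | zero => exact ⟨0, by simp [binaryForm]⟩
    | add f g _ _ hf hg =>
      obtain ⟨a, rfl⟩ := hf
      obtain ⟨b, rfl⟩ := hg
      exact ⟨a + b, by simp [binaryForm, add_smul, Finset.sum_add_distrib]⟩
    | smul r f _ hf =>
      obtain ⟨a, rfl⟩ := hf
      exact ⟨r • a, by simp [binaryForm, Finset.smul_sum, smul_smul]⟩
  · rintro ⟨a, rfl⟩
    exact Submodule.sum_mem _ fun k hk => Submodule.smul_mem _ _
      (Submodule.subset_span ⟨k, Nat.lt_succ_iff.mp (Finset.mem_range.mp hk), rfl⟩)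

theorem binaryForm_eq_smul {n : ℕ} {a b : ℕ → ℂ} {r : ℂ} (h : ∀ k ∈ Set.Iic n, a k = r * b k) :
    binaryForm n a = r • binaryForm n b := by
  rw [binaryForm, binaryForm, Finset.smul_sum]
  refine Finset.sum_congr rfl fun k hk => ?_
  rw [h k (Nat.lt_succ_iff.mp (Finset.mem_range.mp hk)), smul_smul]

theorem binaryForm_ne_zero {n : ℕ} {b : ℕ → ℂ} (h : ∃ k ≤ n, b k ≠ 0) : binaryForm n b ≠ 0 := by
  obtain ⟨k, hkn, hk⟩ := h
  rw [binaryForm_eq_sum_monomial, Ne,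
    sum_smul_monomial_eq_zero_iff (injective_bideg_right fun k => n - k).injOn]
  exact fun h' => hk (h' k (Finset.mem_range.mpr (Nat.lt_succ_of_le hkn)))

theorem finrank_Vn_inf_ker_Ehat {q t s : ℂ} {n : ℕ}
    (h : (∀ k, 1 ≤ k → k ≤ n → vermaCoeff q s k ≠ 0) ∨
      (∀ k, 1 ≤ k → k ≤ n → singularRecCoeff q t s n k ≠ 0)) :
    Module.finrank ℂ (Vn n ⊓ LinearMap.ker (Ehat q t s) : Submodule ℂ _) = 1 := by
  obtain ⟨b, hb, hb0, hprop⟩ := exists_generator_recSolutions h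
  suffices Vn n ⊓ LinearMap.ker (Ehat q t s) = ℂ ∙ binaryForm n b by
    rw [this, finrank_span_singleton (binaryForm_ne_zero hb0)]
  ext w
  simp only [Submodule.mem_inf, LinearMap.mem_ker, mem_Vn_iff, Submodule.mem_span_singleton]
  constructor
  · rintro ⟨⟨a, rfl⟩, ha⟩
    obtain ⟨r, hr⟩ := hprop a ((Ehat_binaryForm_eq_zero_iff q t s n a).mp ha)
    exact ⟨r, (binaryForm_eq_smul hr).symm⟩
  · rintro ⟨r, rfl⟩
    refine ⟨⟨r • b, binaryForm_eq_smul fun k _ => rfl⟩, ?_⟩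
    rw [map_smul, (Ehat_binaryForm_eq_zero_iff q t s n b).mpr hb, smul_zero]

end Stmt19

open Stmt19 in
/-- (1) `v = Σ_{k=0}^n a_k x^{n−k} y^k` is a singular vector
(`Ê_{λ,μ} v = 0`) iff the coefficients satisfy the recurrence
`a_k·[k]_q·[μ−k+1]_q + a_{k−1}·s·q^{2−2k}·[n−k+1]_q·[λ−n+k]_q = 0` for `k = 1,…,n`;
(2) if `t² ∉ q^{2ℕ₀}` or `s² ∉ q^{2ℕ₀}`, the space of such singular vectors of weight
`q^{(λ+μ−2n)ω}` is one-dimensional. -/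
theorem singular_vectors_tensor_Verma (q : ℂ) (hq0 : q ≠ 0)
    (hq : ∀ k : ℕ, 0 < k → q ^ k ≠ 1) (t s : ℂ) (ht : t ≠ 0) (hs : s ≠ 0) :
    (∀ (n : ℕ) (a : ℕ → ℂ),
      Ehat q t s (∑ k ∈ Finset.range (n + 1), a k • (X 0 ^ (n - k) * X 1 ^ k)) = 0 ↔
        ∀ k : ℕ, 1 ≤ k → k ≤ n →
          a k * qNum q k * qWt q s ((k : ℤ) - 1)
            + a (k - 1) * s * q ^ (2 - 2 * (k : ℤ)) * qNum q (n - k + 1)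
              * qWt q t ((n : ℤ) - k) = 0) ∧
    ((∀ m : ℕ, t ^ 2 ≠ q ^ (2 * m)) ∨ (∀ m : ℕ, s ^ 2 ≠ q ^ (2 * m)) →
      ∀ n : ℕ, Module.finrank ℂ (Vn n ⊓ LinearMap.ker (Ehat q t s) : Submodule ℂ _) = 1) := by
  refine ⟨fun n a => (Ehat_binaryForm_eq_zero_iff q t s n a).trans (mem_singularRec_iff q t s n a),
    fun h n => finrank_Vn_inf_ker_Ehat ?_⟩
  have hq2 (i : ℕ) : q ^ (2 * (i + 1)) ≠ 1 := hq _ (by omega)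
  rcases h with hT | hS
  · exact Or.inr fun k _ _ => singularRecCoeff_ne_zero hq0 ht hs (hq2 _) (hT _)
  · refine Or.inl fun k hk _ => ?_
    obtain ⟨i, rfl⟩ : ∃ i, k = i + 1 := ⟨k - 1, by omega⟩
    exact vermaCoeff_succ_ne_zero hq0 hs (hq2 i) (hS i)
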